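/- arXiv:0803.2320 — 11 statements merged into one kernel-verified Lean document; each statement's English description precedes it below -/
import Mathlib

section
/- To verify that f : X → (Z, μ) is fragmented, it suffices to check the fragmentability condition only for closed nonempty subsets A ⊆ X and only for entourages ε belonging to a subbase of the uniformity μ (a family whose finite intersections form a base of μ). -/
/-- A map `f : X → Z` from a topological space to a uniform space is *fragmented* if for
every nonempty subset `A` of `X` and every entourage `ε` of `Z` there is an open set `O`
such that `O ∩ A` is nonempty and `f (O ∩ A)` is `ε`-small. -/
def Fragmented {X Z : Type*} [TopologicalSpace X] [UniformSpace Z] (f : X → Z) : Prop :=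
  ∀ A : Set X, A.Nonempty → ∀ ε ∈ uniformity Z, ∃ O : Set X, IsOpen O ∧ (O ∩ A).Nonempty ∧
    ∀ x ∈ O ∩ A, ∀ y ∈ O ∩ A, (f x, f y) ∈ ε

/-! Passing to the closure of `A` loses nothing, since an open set meeting `closure A` meets `A`.
Smallness for finitely many entourages is obtained by shrinking: after an open piece `O ∩ A`
is `ε`-small, look for a `δ`-small open piece inside the (again nonempty) set `O ∩ A`; the
resulting piece is `ε ∩ δ`-small. -/

section

variable {X Z : Type*} [TopologicalSpace X] (f : X → Z)

def HasSmallOpenPiece (ε : Set (Z × Z)) (A : Set X) : Prop :=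
  ∃ O : Set X, IsOpen O ∧ (O ∩ A).Nonempty ∧ ∀ x ∈ O ∩ A, ∀ y ∈ O ∩ A, (f x, f y) ∈ ε

def FragmentedFor (ε : Set (Z × Z)) : Prop :=
  ∀ A : Set X, A.Nonempty → HasSmallOpenPiece f ε A

variable {f}

theorem hasSmallOpenPiece_of_closure {ε : Set (Z × Z)} {A : Set X}
    (h : HasSmallOpenPiece f ε (closure A)) : HasSmallOpenPiece f ε A := by
  obtain ⟨O, hO, ⟨a, haO, haA⟩, hsmall⟩ := h
  refine ⟨O, hO, mem_closure_iff.mp haA O hO haO, fun x hx y hy => ?_⟩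
  exact hsmall x ⟨hx.1, subset_closure hx.2⟩ y ⟨hy.1, subset_closure hy.2⟩

theorem fragmentedFor_of_isClosed {ε : Set (Z × Z)}
    (h : ∀ A : Set X, IsClosed A → A.Nonempty → HasSmallOpenPiece f ε A) :
    FragmentedFor f ε :=
  fun _ hA => hasSmallOpenPiece_of_closure (h _ isClosed_closure hA.closure)

theorem FragmentedFor.mono {ε δ : Set (Z × Z)} (h : FragmentedFor f ε) (hεδ : ε ⊆ δ) :
    FragmentedFor f δ := fun A hA => by
  obtain ⟨O, hO, hne, hsmall⟩ := h A hA
  exact ⟨O, hO, hne, fun x hx y hy => hεδ (hsmall x hx y hy)⟩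

theorem fragmentedFor_univ : FragmentedFor f (Set.univ : Set (Z × Z)) :=
  fun _ hA => ⟨Set.univ, isOpen_univ, by rwa [Set.univ_inter], fun _ _ _ _ => trivial⟩

theorem FragmentedFor.inter {ε δ : Set (Z × Z)} (hε : FragmentedFor f ε)
    (hδ : FragmentedFor f δ) : FragmentedFor f (ε ∩ δ) := fun A hA => by
  obtain ⟨O, hO, hne, hsmall⟩ := hε A hA
  obtain ⟨O', hO', hne', hsmall'⟩ := hδ (O ∩ A) hne
  refine ⟨O' ∩ O, hO'.inter hO, by rwa [Set.inter_assoc], fun x hx y hy => ?_⟩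
  rw [Set.inter_assoc] at hx hy
  exact ⟨hsmall x hx.2 y hy.2, hsmall' x hx y hy⟩

theorem fragmentedFor_sInter {t : Set (Set (Z × Z))} (ht : t.Finite)
    (h : ∀ ε ∈ t, FragmentedFor f ε) : FragmentedFor f (⋂₀ t) := by
  induction t, ht using Set.Finite.induction_on with
  | empty => simpa using fragmentedFor_univ
  | @insert ε s _ _ ih =>
    rw [Set.sInter_insert]
    exact (h ε (Set.mem_insert _ _)).inter (ih fun δ hδ => h δ (Set.mem_insert_of_mem _ hδ))

theorem fragmented_iff_forall_fragmentedFor [UniformSpace Z] :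
    Fragmented f ↔ ∀ ε ∈ uniformity Z, FragmentedFor f ε :=
  ⟨fun h _ hε A hA => h A hA _ hε, fun h A hA _ hε => h _ hε A hA⟩

end

theorem fragmented_of_closed_and_subbase_general {X Z : Type*} [TopologicalSpace X] [UniformSpace Z]
    (f : X → Z) (γ : Set (Set (Z × Z)))
    (hsubbase : ∀ ε ∈ uniformity Z, ∃ t : Set (Set (Z × Z)), t.Finite ∧ t ⊆ γ ∧ ⋂₀ t ⊆ ε)
    (h : ∀ A : Set X, IsClosed A → A.Nonempty → ∀ ε ∈ γ,
      ∃ O : Set X, IsOpen O ∧ (O ∩ A).Nonempty ∧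
        ∀ x ∈ O ∩ A, ∀ y ∈ O ∩ A, (f x, f y) ∈ ε) :
    Fragmented f := by
  have hγ : ∀ ε ∈ γ, FragmentedFor f ε :=
    fun ε hε => fragmentedFor_of_isClosed fun A hA hne => h A hA hne ε hε
  refine fragmented_iff_forall_fragmentedFor.mpr fun ε hε => ?_
  obtain ⟨t, htf, htγ, htε⟩ := hsubbase ε hε
  exact (fragmentedFor_sInter htf fun δ hδ => hγ δ (htγ hδ)).mono htε

/-- To verify fragmentability it suffices to check the condition only for *closed*
nonempty subsets `A ⊆ X` and for entourages `ε` belonging to a *subbase* `γ` of the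
uniformity (i.e. a family of entourages whose finite intersections form a base of the
uniformity). -/
theorem fragmented_of_closed_and_subbase {X Z : Type*} [TopologicalSpace X] [UniformSpace Z]
    (f : X → Z) (γ : Set (Set (Z × Z)))
    (hγ : ∀ ε ∈ γ, ε ∈ uniformity Z)
    (hsubbase : ∀ ε ∈ uniformity Z, ∃ t : Set (Set (Z × Z)), t.Finite ∧ t ⊆ γ ∧ ⋂₀ t ⊆ ε)
    (h : ∀ A : Set X, IsClosed A → A.Nonempty → ∀ ε ∈ γ,
      ∃ O : Set X, IsOpen O ∧ (O ∩ A).Nonempty ∧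
        ∀ x ∈ O ∩ A, ∀ y ∈ O ∩ A, (f x, f y) ∈ ε) :
    Fragmented f :=
  fragmented_of_closed_and_subbase_general f γ hsubbase h
end

section
/- Let p : X → Y be a map from a topological space X into a compact Hausdorff space Y, and let {f_i : Y → Z_i} be a family of continuous maps into Hausdorff uniform spaces Z_i which separates the points of Y. If each composition f_i ∘ p : X → Z_i is fragmented, then p : X → Y is fragmented (with respect to the unique compatible uniformity on Y). -/
open Filter Topology Uniformity

section Fragmentation

variable {X Z Z' : Type*} [TopologicalSpace X]

def fragmentationFilter (f : X → Z) : Filter (Z × Z) where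
  sets := {ε | ∀ A : Set X, A.Nonempty → ∃ O : Set X, IsOpen O ∧ (O ∩ A).Nonempty ∧
    ∀ x ∈ O ∩ A, ∀ y ∈ O ∩ A, (f x, f y) ∈ ε}
  univ_sets A hA := ⟨Set.univ, isOpen_univ, by simpa using hA, fun _ _ _ _ ↦ trivial⟩
  sets_of_superset hε hεδ A hA := by
    obtain ⟨O, hO, hOA, hsmall⟩ := hε A hA
    exact ⟨O, hO, hOA, fun x hx y hy ↦ hεδ (hsmall x hx y hy)⟩
  inter_sets {ε δ} hε hδ A hA := by
    obtain ⟨O, hO, hOA, hε⟩ := hε A hA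
    obtain ⟨O', hO', hO'A, hδ⟩ := hδ (O ∩ A) hOA
    refine ⟨O' ∩ O, hO'.inter hO, by rwa [Set.inter_assoc], fun x hx y hy ↦ ?_⟩
    rw [Set.inter_assoc] at hx hy
    exact ⟨hε x hx.2 y hy.2, hδ x hx y hy⟩

theorem fragmented_iff_fragmentationFilter_le [UniformSpace Z] {f : X → Z} :
    Fragmented f ↔ fragmentationFilter f ≤ 𝓤 Z :=
  ⟨fun h _ hε A hA ↦ h A hA _ hε, fun h A hA _ hε ↦ h hε A hA⟩

theorem map_fragmentationFilter (f : X → Z) (φ : Z → Z') :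
    (fragmentationFilter f).map (fun q ↦ (φ q.1, φ q.2)) = fragmentationFilter (φ ∘ f) :=
  rfl

theorem IsUniformInducing.fragmented_comp_iff [UniformSpace Z] [UniformSpace Z'] {e : Z → Z'}
    (he : IsUniformInducing e) {f : X → Z} : Fragmented (e ∘ f) ↔ Fragmented f := by
  simp only [fragmented_iff_fragmentationFilter_le, ← he.comap_uniformity, ← map_le_iff_le_comap,
    map_fragmentationFilter]

theorem fragmented_pi_iff {ι : Type*} {Z : ι → Type*} [∀ i, UniformSpace (Z i)]
    {f : X → ∀ i, Z i} : Fragmented f ↔ ∀ i, Fragmented (fun x ↦ f x i) := by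
  simp only [fragmented_iff_fragmentationFilter_le, Pi.uniformity, le_iInf_iff,
    ← map_le_iff_le_comap]
  exact forall_congr' fun i ↦ by
    rw [map_fragmentationFilter f fun a ↦ a i, Function.comp_def]

end Fragmentation

theorem Topology.IsEmbedding.isUniformInducing_of_compactSpace {Y W : Type*} [UniformSpace Y]
    [CompactSpace Y] [UniformSpace W] {e : Y → W} (he : IsEmbedding e) : IsUniformInducing e :=
  isUniformInducing_iff_uniformSpace.2 <| unique_uniformity_of_compact
    (by rw [UniformSpace.toTopologicalSpace_comap, he.eq_induced]) rfl

theorem fragmented_of_separating_family_general {X Y : Type*} {ι : Type*} {Z : ι → Type*}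
    [TopologicalSpace X] [UniformSpace Y] [CompactSpace Y]
    [∀ i, UniformSpace (Z i)] [∀ i, T2Space (Z i)]
    (p : X → Y) (f : ∀ i, Y → Z i) (hf : ∀ i, Continuous (f i))
    (hsep : ∀ y y' : Y, (∀ i, f i y = f i y') → y = y')
    (hfp : ∀ i, Fragmented (f i ∘ p)) :
    Fragmented p := by
  let F : Y → ∀ i, Z i := fun y i ↦ f i y
  have hF : IsUniformInducing F :=
    ((continuous_pi hf).isClosedEmbedding fun y y' h ↦ hsep y y' (congrFun h)).isEmbedding
      |>.isUniformInducing_of_compactSpace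
  exact hF.fragmented_comp_iff.1 (fragmented_pi_iff.2 hfp)

/-- Let `p : X → Y` map a topological space into a compact Hausdorff space `Y`
(carrying its unique compatible uniformity), and let `{f i : Y → Z i}` be a point-separating
family of continuous maps into Hausdorff uniform spaces. If each `f i ∘ p` is fragmented,
then `p` is fragmented. -/
theorem fragmented_of_separating_family {X Y : Type*} {ι : Type*} {Z : ι → Type*}
    [TopologicalSpace X] [UniformSpace Y] [CompactSpace Y] [T2Space Y]
    [∀ i, UniformSpace (Z i)] [∀ i, T2Space (Z i)]
    (p : X → Y) (f : ∀ i, Y → Z i) (hf : ∀ i, Continuous (f i))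
    (hsep : ∀ y y' : Y, (∀ i, f i y = f i y') → y = y')
    (hfp : ∀ i, Fragmented (f i ∘ p)) :
    Fragmented p :=
  fragmented_of_separating_family_general p f hf hsep hfp
end

section
/- Let X, X' be compact Hausdorff spaces, (Y, μ) and (Y', μ') uniform spaces, α : X → X' a continuous surjection, ν : Y → Y' uniformly continuous, and φ : X → Y, φ' : X' → Y' maps with φ' ∘ α = ν ∘ φ. If φ is fragmented then φ' is fragmented. -/
/-!
Given `B ⊆ X'`, choose by Zorn's lemma a closed set `M ⊆ X` minimal with `B ⊆ α '' M`.
Fragmentability of `φ` gives an open `O` meeting `M` such that `ν ∘ φ` is `ε'`-small on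
`O ∩ M`. By minimality `B` is not covered by the closed set `K = α '' (M \ O)`, so the open
set `Kᶜ` meets `B`, and every point of `Kᶜ ∩ B` is the image of a point of `O ∩ M`;
hence `φ'` is `ε'`-small on `Kᶜ ∩ B`.
-/

open Set

theorem exists_minimal_isClosed_subset_image {X X' : Type*} [TopologicalSpace X] [CompactSpace X]
    [TopologicalSpace X'] [T1Space X'] {α : X → X'} (hα : Continuous α) {B : Set X'}
    (hB : B ⊆ range α) : ∃ M : Set X, Minimal (fun M ↦ IsClosed M ∧ B ⊆ α '' M) M := by
  suffices hchain : ∀ C ⊆ {M | IsClosed M ∧ B ⊆ α '' M}, IsChain (· ⊆ ·) C → C.Nonempty →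
      ∃ L ∈ {M | IsClosed M ∧ B ⊆ α '' M}, ∀ M ∈ C, L ⊆ M by
    obtain ⟨M, -, hM⟩ := zorn_superset_nonempty _ hchain univ ⟨isClosed_univ, image_univ ▸ hB⟩
    exact ⟨M, hM⟩
  intro C hCS hC hCne
  have : Nonempty C := hCne.to_subtype
  have hC' : IsChain (· ⊇ ·) C := hC.symm
  refine ⟨⋂₀ C, ⟨isClosed_sInter fun M hM ↦ (hCS hM).1, fun b hb ↦ ?_⟩, fun M ↦ sInter_subset_of_mem⟩
  -- Cantor's intersection theorem, applied to the fibres over `b`.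
  have hfib : (⋂ M : C, (M : Set X) ∩ α ⁻¹' {b}).Nonempty := by
    refine IsCompact.nonempty_iInter_of_directed_nonempty_isCompact_isClosed _ ?_ (fun M ↦ ?_)
      (fun M ↦ ?_) (fun M ↦ ?_)
    · exact (directedOn_iff_directed.mp hC'.directedOn).mono_comp (g := (· ∩ α ⁻¹' {b})) _
        fun _ _ ↦ inter_subset_inter_left _
    · obtain ⟨x, hx, rfl⟩ := (hCS M.2).2 hb
      exact ⟨x, hx, rfl⟩
    · exact ((hCS M.2).1.inter (isClosed_singleton.preimage hα)).isCompact
    · exact (hCS M.2).1.inter (isClosed_singleton.preimage hα)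
  obtain ⟨x, hx⟩ := hfib
  rw [mem_iInter] at hx
  exact ⟨x, mem_sInter.mpr fun M hM ↦ (hx ⟨M, hM⟩).1, (hx (Classical.arbitrary C)).2⟩

theorem fragmented_quotient_general {X X' Y Y' : Type*}
    [TopologicalSpace X] [CompactSpace X]
    [TopologicalSpace X'] [T2Space X']
    [UniformSpace Y] [UniformSpace Y']
    (α : X → X') (hαc : Continuous α) (hαs : Function.Surjective α)
    (ν : Y → Y') (hν : UniformContinuous ν)
    (φ : X → Y) (φ' : X' → Y') (hcomm : φ' ∘ α = ν ∘ φ)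
    (hφ : Fragmented φ) : Fragmented φ' := by
  intro B hB ε' hε'
  obtain ⟨M, hM⟩ := exists_minimal_isClosed_subset_image hαc (hαs.range_eq ▸ subset_univ B)
  obtain ⟨O, hO, hOM, hsmall⟩ := hφ M (hB.mono hM.1.2).of_image _ (hν hε')
  set K := α '' (M \ O)
  have hK : IsClosed K := ((hM.1.1.sdiff hO).isCompact.image hαc).isClosed
  have hBK : ¬ B ⊆ K := fun hBK ↦ by
    obtain ⟨x, hxO, hxM⟩ := hOM
    exact (hM.eq_of_subset ⟨hM.1.1.sdiff hO, hBK⟩ sdiff_subset ▸ hxM).2 hxO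
  have hlift : ∀ x' ∈ Kᶜ ∩ B, ∃ x ∈ O ∩ M, α x = x' := by
    rintro x' ⟨hx'K, hx'B⟩
    obtain ⟨x, hxM, rfl⟩ := hM.1.2 hx'B
    exact ⟨x, ⟨by_contra fun hxO ↦ hx'K ⟨x, ⟨hxM, hxO⟩, rfl⟩, hxM⟩, rfl⟩
  refine ⟨Kᶜ, hK.isOpen_compl, not_subset.mp hBK |>.imp fun b ⟨hb, hbK⟩ ↦ ⟨hbK, hb⟩, ?_⟩
  intro _ hx' _ hy'
  obtain ⟨x, hx, rfl⟩ := hlift _ hx'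
  obtain ⟨y, hy, rfl⟩ := hlift _ hy'
  change ((φ' ∘ α) x, (φ' ∘ α) y) ∈ ε'
  rw [hcomm]
  exact hsmall x hx y hy

/-- If `α : X → X'` is a continuous surjection of compact Hausdorff spaces,
`ν : Y → Y'` is uniformly continuous, `φ' ∘ α = ν ∘ φ`, and `φ` is fragmented,
then `φ'` is fragmented. -/
theorem fragmented_quotient {X X' Y Y' : Type*}
    [TopologicalSpace X] [CompactSpace X] [T2Space X]
    [TopologicalSpace X'] [CompactSpace X'] [T2Space X']
    [UniformSpace Y] [UniformSpace Y']
    (α : X → X') (hαc : Continuous α) (hαs : Function.Surjective α)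
    (ν : Y → Y') (hν : UniformContinuous ν)
    (φ : X → Y) (φ' : X' → Y') (hcomm : φ' ∘ α = ν ∘ φ)
    (hφ : Fragmented φ) : Fragmented φ' :=
  fragmented_quotient_general α hαc hαs ν hν φ φ' hcomm hφ
end

section
/- Let α : X → X' be a continuous surjection between compact Hausdorff spaces, (Y, μ) a uniform space, and f : X → Y, f' : X' → Y maps with f' ∘ α = f. Then f is fragmented if and only if f' is fragmented. -/
open Set

section MinimalClosed

variable {X X' : Type*} [TopologicalSpace X] [TopologicalSpace X'] {α : X → X'}

theorem Continuous.image_sInter_of_isChain [CompactSpace X] [T1Space X'] (hα : Continuous α)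
    {c : Set (Set X)} (hchain : IsChain (· ⊆ ·) c) (hne : c.Nonempty)
    (hclosed : ∀ B ∈ c, IsClosed B) : α '' ⋂₀ c = ⋂ B ∈ c, α '' B := by
  refine (image_sInter_subset c α).antisymm fun y hy => ?_
  have : Nonempty c := hne.to_subtype
  have hdirected : IsChain (· ⊇ ·) c := hchain.symm
  have hfibre (B : c) : IsClosed ((B : Set X) ∩ α ⁻¹' {y}) :=
    (hclosed B B.2).inter (isClosed_singleton.preimage hα)
  obtain ⟨x, hx⟩ := IsCompact.nonempty_iInter_of_directed_nonempty_isCompact_isClosed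
    (fun B : c => (B : Set X) ∩ α ⁻¹' {y})
    ((directedOn_iff_directed.mp hdirected.directedOn).mono_comp (g := (· ∩ α ⁻¹' {y})) _
      fun _ _ => inter_subset_inter_left _)
    (fun B => image_inter_nonempty_iff.mp (by simpa using mem_iInter₂.mp hy B B.2))
    (fun B => (hfibre B).isCompact) hfibre
  simp only [mem_iInter, mem_inter_iff, mem_preimage, mem_singleton_iff] at hx
  exact ⟨x, mem_sInter.mpr fun B hB => (hx ⟨B, hB⟩).1, (hx ⟨_, hne.some_mem⟩).2⟩

theorem Continuous.exists_minimal_isClosed_image_eq [CompactSpace X] [T1Space X']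
    (hα : Continuous α) {K : Set X} (hK : IsClosed K) :
    ∃ B ⊆ K, Minimal (fun B => IsClosed B ∧ α '' B = α '' K) B := by
  refine zorn_superset_nonempty _ (fun c hc hchain hne => ?_) K ⟨hK, rfl⟩
  refine ⟨⋂₀ c, ⟨isClosed_sInter fun B hB => (hc hB).1, ?_⟩, fun B => sInter_subset_of_mem⟩
  rw [hα.image_sInter_of_isChain hchain hne fun B hB => (hc hB).1]
  obtain ⟨B₀, hB₀⟩ := hne
  exact (biInter_subset_of_mem hB₀).trans_eq (hc hB₀).2 |>.antisymm
    (subset_iInter₂ fun B hB => (hc hB).2.symm.subset)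

theorem exists_isOpen_inter_subset_image_of_minimal [CompactSpace X] [T2Space X']
    (hα : Continuous α) {B : Set X} {C : Set X'}
    (hB : Minimal (fun B => IsClosed B ∧ α '' B = C) B) {U : Set X} (hU : IsOpen U)
    (hUB : (U ∩ B).Nonempty) :
    ∃ O : Set X', IsOpen O ∧ (O ∩ C).Nonempty ∧ O ∩ C ⊆ α '' (U ∩ B) := by
  obtain ⟨hBclosed, hBC⟩ := hB.prop
  have hrest : IsClosed (B \ U) := hBclosed.sdiff hU
  have hcover : α '' B \ α '' (B \ U) ⊆ α '' (U ∩ B) := by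
    rintro _ ⟨⟨x, hxB, rfl⟩, hx⟩
    exact ⟨x, ⟨not_not.mp fun hxU => hx ⟨x, ⟨hxB, hxU⟩, rfl⟩, hxB⟩, rfl⟩
  refine ⟨(α '' (B \ U))ᶜ, ((hrest.isCompact.image hα).isClosed).isOpen_compl, ?_,
    by rwa [inter_comm, ← sdiff_eq, ← hBC]⟩
  rw [inter_comm, ← sdiff_eq, sdiff_nonempty]
  intro hCsub
  have hrestC : α '' (B \ U) = C := (image_mono sdiff_subset).trans_eq hBC |>.antisymm hCsub
  obtain ⟨x, hxU, hxB⟩ := hUB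
  exact (hB.eq_of_subset ⟨hrest, hrestC⟩ sdiff_subset ▸ hxB).2 hxU

end MinimalClosed

section Fragmented

variable {X X' Z : Type*} [TopologicalSpace X] [TopologicalSpace X'] [UniformSpace Z]

theorem Fragmented.comp_continuous {f : X' → Z} (hf : Fragmented f) {α : X → X'}
    (hα : Continuous α) : Fragmented (f ∘ α) := by
  intro A hA ε hε
  obtain ⟨O, hO, ⟨_, hxO, x, hxA, rfl⟩, hsmall⟩ := hf (α '' A) (hA.image α) ε hε
  exact ⟨α ⁻¹' O, hO.preimage hα, ⟨x, hxO, hxA⟩, fun x hx y hy =>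
    hsmall _ ⟨hx.1, mem_image_of_mem α hx.2⟩ _ ⟨hy.1, mem_image_of_mem α hy.2⟩⟩

theorem fragmented_of_forall_isClosed {f : X → Z}
    (h : ∀ C : Set X, IsClosed C → C.Nonempty → ∀ ε ∈ uniformity Z, ∃ O : Set X, IsOpen O ∧
      (O ∩ C).Nonempty ∧ ∀ x ∈ O ∩ C, ∀ y ∈ O ∩ C, (f x, f y) ∈ ε) :
    Fragmented f := by
  intro A hA ε hε
  obtain ⟨O, hO, hOC, hsmall⟩ := h (closure A) isClosed_closure hA.closure ε hε
  refine ⟨O, hO, ?_, fun x hx y hy =>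
    hsmall x ⟨hx.1, subset_closure hx.2⟩ y ⟨hy.1, subset_closure hy.2⟩⟩
  obtain ⟨y, hyO, hyA⟩ := hOC
  exact mem_closure_iff.mp hyA O hO hyO

theorem Fragmented.of_comp [CompactSpace X] [T2Space X'] {f : X' → Z} {α : X → X'}
    (hα : Continuous α) (hαs : Function.Surjective α) (hf : Fragmented (f ∘ α)) :
    Fragmented f := by
  refine fragmented_of_forall_isClosed fun C hC hCne ε hε => ?_
  obtain ⟨B, -, hB⟩ := hα.exists_minimal_isClosed_image_eq (hC.preimage hα)
  rw [image_preimage_eq C hαs] at hB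
  have hBne : B.Nonempty := by
    rw [← hB.prop.2] at hCne
    exact hCne.of_image
  obtain ⟨U, hU, hUB, hsmall⟩ := hf B hBne ε hε
  obtain ⟨O, hO, hOC, hcover⟩ := exists_isOpen_inter_subset_image_of_minimal hα hB hU hUB
  refine ⟨O, hO, hOC, fun _ hx _ hy => ?_⟩
  obtain ⟨x, hxU, rfl⟩ := hcover hx
  obtain ⟨y, hyU, rfl⟩ := hcover hy
  exact hsmall x hxU y hyU

end Fragmented

theorem fragmented_factor_iff_general {X X' Y : Type*}
    [TopologicalSpace X] [CompactSpace X]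
    [TopologicalSpace X'] [T2Space X']
    [UniformSpace Y]
    (α : X → X') (hαc : Continuous α) (hαs : Function.Surjective α)
    (f : X → Y) (f' : X' → Y) (hcomm : f' ∘ α = f) :
    Fragmented f ↔ Fragmented f' := by
  subst hcomm
  exact ⟨Fragmented.of_comp hαc hαs, fun hf' => hf'.comp_continuous hαc⟩

/-- For a continuous surjection `α : X → X'` of compact Hausdorff spaces and maps
`f : X → Y`, `f' : X' → Y` with `f' ∘ α = f`, the map `f` is fragmented iff `f'` is. -/
theorem fragmented_factor_iff {X X' Y : Type*}
    [TopologicalSpace X] [CompactSpace X] [T2Space X]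
    [TopologicalSpace X'] [CompactSpace X'] [T2Space X']
    [UniformSpace Y]
    (α : X → X') (hαc : Continuous α) (hαs : Function.Surjective α)
    (f : X → Y) (f' : X' → Y) (hcomm : f' ∘ α = f) :
    Fragmented f ↔ Fragmented f' :=
  fragmented_factor_iff_general α hαc hαs f f' hcomm
end

section
/- If X is a Baire topological space, (Y, ρ) a pseudometric space, and f : X → Y is fragmented, then the set of points of continuity of f is a dense G_δ subset of X. -/
/-!
Let `W ε` be the set of points having an open neighbourhood on which `f` oscillates by at most
`ε`. Each `W ε` is open, and fragmentability says exactly that `W ε` meets every nonempty open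
set, so it is dense. By the Baire property `⋂ₙ W (1 / (n + 1))` is dense, and `f` is continuous
at each of its points. The continuity points of any map into a pseudometric space form a `G_δ`.
-/

/-- A map `f : X → Y` into a pseudometric space is *fragmented* if for every nonempty
subset `A` of `X` and every `ε > 0` there is an open set `O` with `O ∩ A` nonempty and
the diameter of `f (O ∩ A)` at most `ε`. -/
def FragmentedPseudo {X Y : Type*} [TopologicalSpace X] [PseudoMetricSpace Y] (f : X → Y) :
    Prop :=
  ∀ A : Set X, A.Nonempty → ∀ ε > (0 : ℝ), ∃ O : Set X, IsOpen O ∧ (O ∩ A).Nonempty ∧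
    ∀ x ∈ O ∩ A, ∀ y ∈ O ∩ A, dist (f x) (f y) ≤ ε

section SmallOscillation

variable {X Y : Type*} [TopologicalSpace X] [PseudoMetricSpace Y]

def smallOscillationSet (f : X → Y) (ε : ℝ) : Set X :=
  {x | ∃ O : Set X, IsOpen O ∧ x ∈ O ∧ ∀ a ∈ O, ∀ b ∈ O, dist (f a) (f b) ≤ ε}

theorem isOpen_smallOscillationSet (f : X → Y) (ε : ℝ) : IsOpen (smallOscillationSet f ε) :=
  isOpen_iff_forall_mem_open.2 fun _ ⟨O, hO, hxO, hdist⟩ =>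
    ⟨O, fun _ hy => ⟨O, hO, hy, hdist⟩, hO, hxO⟩

theorem FragmentedPseudo.dense_smallOscillationSet {f : X → Y} (hf : FragmentedPseudo f)
    {ε : ℝ} (hε : 0 < ε) : Dense (smallOscillationSet f ε) := by
  refine dense_iff_inter_open.2 fun V hV hVne => ?_
  obtain ⟨O, hO, ⟨x, hxO, hxV⟩, hdist⟩ := hf V hVne ε hε
  exact ⟨x, hxV, O ∩ V, hO.inter hV, ⟨hxO, hxV⟩, hdist⟩

theorem iInter_smallOscillationSet_subset_continuousAt (f : X → Y) :
    ⋂ n : ℕ, smallOscillationSet f (1 / (n + 1)) ⊆ {x | ContinuousAt f x} := by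
  intro x hx
  refine Metric.tendsto_nhds.2 fun ε hε => ?_
  obtain ⟨n, hn⟩ := exists_nat_one_div_lt hε
  obtain ⟨O, hO, hxO, hdist⟩ := Set.mem_iInter.1 hx n
  filter_upwards [hO.mem_nhds hxO] with y hy
  exact (hdist y hy x hxO).trans_lt hn

end SmallOscillation

/-- If `X` is a Baire space, `Y` pseudometric and `f : X → Y` is fragmented, then the set
of continuity points of `f` is a dense `G_δ` subset of `X`. -/
theorem fragmented_continuityPoints_denseGdelta {X Y : Type*} [TopologicalSpace X]
    [BaireSpace X] [PseudoMetricSpace Y] (f : X → Y) (hf : FragmentedPseudo f) :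
    Dense {x : X | ContinuousAt f x} ∧ IsGδ {x : X | ContinuousAt f x} := by
  have hdense : Dense (⋂ n : ℕ, smallOscillationSet f (1 / (n + 1))) :=
    dense_iInter_of_isOpen (fun _ => isOpen_smallOscillationSet f _)
      (fun _ => hf.dense_smallOscillationSet Nat.one_div_pos_of_nat)
  exact ⟨hdense.mono (iInter_smallOscillationSet_subset_continuousAt f),
    IsGδ.setOfPred_continuousAt f⟩
end

section
/- Let X be a hereditarily Baire topological space and (Y, ρ) a pseudometric space. A map f : X → Y is fragmented if and only if f is barely continuous. -/
/-- `f : X → Y` is *barely continuous* if for every nonempty closed `A ⊆ X` the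
restriction `f|_A` has a point of continuity. -/
def BarelyContinuous {X Y : Type*} [TopologicalSpace X] [TopologicalSpace Y]
    (f : X → Y) : Prop :=
  ∀ A : Set X, IsClosed A → A.Nonempty → ∃ a ∈ A, ContinuousWithinAt f A a

def smallVariationSet {Z Y : Type*} [TopologicalSpace Z] [PseudoMetricSpace Y] (g : Z → Y)
    (ε : ℝ) : Set Z :=
  {z | ∃ O, IsOpen O ∧ z ∈ O ∧ ∀ x ∈ O, ∀ y ∈ O, dist (g x) (g y) ≤ ε}

section

variable {Z Y : Type*} [TopologicalSpace Z] [PseudoMetricSpace Y] {g : Z → Y}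

theorem isOpen_smallVariationSet (g : Z → Y) (ε : ℝ) : IsOpen (smallVariationSet g ε) := by
  refine isOpen_iff_forall_mem_open.2 fun z ⟨O, hO, hzO, hvar⟩ => ⟨O, ?_, hO, hzO⟩
  exact fun w hw => ⟨O, hO, hw, hvar⟩

theorem FragmentedPseudo.dense_smallVariationSet (hg : FragmentedPseudo g) {ε : ℝ}
    (hε : 0 < ε) : Dense (smallVariationSet g ε) := by
  refine dense_iff_inter_open.2 fun W hW hWne => ?_
  obtain ⟨O, hO, ⟨z, hzO, hzW⟩, hvar⟩ := hg W hWne ε hε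
  exact ⟨z, hzW, O ∩ W, hO.inter hW, ⟨hzO, hzW⟩, hvar⟩

theorem continuousAt_of_forall_mem_smallVariationSet {z : Z}
    (hz : ∀ n : ℕ, z ∈ smallVariationSet g (1 / (n + 1))) : ContinuousAt g z := by
  refine Metric.continuousAt_iff'.2 fun ε hε => ?_
  obtain ⟨n, hn⟩ := exists_nat_one_div_lt hε
  obtain ⟨O, hO, hzO, hvar⟩ := hz n
  filter_upwards [hO.mem_nhds hzO] with x hx
  exact (hvar x hx z hzO).trans_lt hn

theorem FragmentedPseudo.dense_setOf_continuousAt [BaireSpace Z] (hg : FragmentedPseudo g) :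
    Dense {z | ContinuousAt g z} := by
  have hdense : Dense (⋂ n : ℕ, smallVariationSet g (1 / (n + 1))) :=
    dense_iInter_of_isOpen (fun n => isOpen_smallVariationSet g _)
      (fun n => hg.dense_smallVariationSet (by positivity))
  exact hdense.mono fun z hz => continuousAt_of_forall_mem_smallVariationSet (Set.mem_iInter.1 hz)

end

section

variable {X Y : Type*} [TopologicalSpace X] [PseudoMetricSpace Y] {f : X → Y}

theorem FragmentedPseudo.domRestrict (hf : FragmentedPseudo f) (A : Set X) :
    FragmentedPseudo (A.domRestrict f) := by
  intro B hBne ε hε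
  obtain ⟨O, hO, ⟨_, hxO, x, hxB, rfl⟩, hvar⟩ := hf (Subtype.val '' B) (hBne.image _) ε hε
  refine ⟨Subtype.val ⁻¹' O, hO.preimage continuous_subtype_val, ⟨x, hxO, hxB⟩, ?_⟩
  exact fun x hx y hy => hvar x ⟨hx.1, x, hx.2, rfl⟩ y ⟨hy.1, y, hy.2, rfl⟩

theorem BarelyContinuous.fragmentedPseudo (hf : BarelyContinuous f) : FragmentedPseudo f := by
  intro A hAne ε hε
  obtain ⟨a, haA, hcont⟩ := hf (closure A) isClosed_closure hAne.closure
  obtain ⟨O, hO, haO, hball⟩ :=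
    mem_nhdsWithin.1 (hcont (Metric.ball_mem_nhds (f a) (half_pos hε)))
  refine ⟨O, hO, mem_closure_iff.1 haA O hO haO, fun x hx y hy => ?_⟩
  have hxa : dist (f x) (f a) < ε / 2 := hball ⟨hx.1, subset_closure hx.2⟩
  have hya : dist (f y) (f a) < ε / 2 := hball ⟨hy.1, subset_closure hy.2⟩
  calc dist (f x) (f y) ≤ dist (f x) (f a) + dist (f y) (f a) := dist_triangle_right _ _ _
    _ ≤ ε := by linarith

end

/-- On a hereditarily Baire space, a map into a pseudometric space is fragmented iff it
is barely continuous. -/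
theorem fragmented_iff_barelyContinuous {X Y : Type*} [TopologicalSpace X]
    [PseudoMetricSpace Y]
    (hX : ∀ A : Set X, IsClosed A → A.Nonempty → BaireSpace A)
    (f : X → Y) : FragmentedPseudo f ↔ BarelyContinuous f := by
  refine ⟨fun hf A hA hAne => ?_, BarelyContinuous.fragmentedPseudo⟩
  have := hX A hA hAne
  have := hAne.to_subtype
  obtain ⟨⟨a, haA⟩, hcont⟩ := (hf.domRestrict A).dense_setOf_continuousAt.nonempty
  exact ⟨a, haA, (continuousWithinAt_iff_continuousAt_domRestrict f haA).2 hcont⟩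
end

section
/- Let F be a fragmented family of functions from a topological space (X, τ) to a uniform space (Y, μ). Then the pointwise closure of F in Y^X is also a fragmented family. -/
/- The smallness condition `∀ x y ∈ O ∩ A, (f x, f y) ∈ ε` is pointwise closed in `f` when `ε` is
a closed entourage, and closed entourages form a basis of the uniformity; so the open set that
works for `F` and a closed entourage inside `ε` works for the closure of `F` and `ε`. -/

/-- A family `F` of maps from a topological space `X` to a uniform space `Y` is a
*fragmented family* if for every nonempty subset `A` of `X` and every entourage `ε`
there is an open set `O` with `O ∩ A` nonempty such that `f (O ∩ A)` is `ε`-small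
simultaneously for every `f ∈ F`. -/
def FragmentedFamily {X Y : Type*} [TopologicalSpace X] [UniformSpace Y]
    (F : Set (X → Y)) : Prop :=
  ∀ A : Set X, A.Nonempty → ∀ ε ∈ uniformity Y, ∃ O : Set X, IsOpen O ∧ (O ∩ A).Nonempty ∧
    ∀ f ∈ F, ∀ x ∈ O ∩ A, ∀ y ∈ O ∩ A, (f x, f y) ∈ ε

theorem isClosed_setOf_forall_apply_pair_mem {X Y : Type*} [TopologicalSpace Y] (S : Set X)
    {s : Set (Y × Y)} (hs : IsClosed s) :
    IsClosed {f : X → Y | ∀ x ∈ S, ∀ y ∈ S, (f x, f y) ∈ s} := by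
  simp only [Set.ofPred_forall]
  exact isClosed_biInter fun x _ => isClosed_biInter fun y _ =>
    hs.preimage ((continuous_apply x).prodMk (continuous_apply y))

/-- The pointwise closure (closure in the product topology on `Y^X`) of a fragmented
family is again a fragmented family. -/
theorem fragmentedFamily_closure {X Y : Type*} [TopologicalSpace X] [UniformSpace Y]
    (F : Set (X → Y)) (hF : FragmentedFamily F) :
    FragmentedFamily (closure F) := by
  intro A hA ε hε
  obtain ⟨δ, ⟨hδ, hδ_closed⟩, hδε⟩ := uniformity_hasBasis_closed.mem_iff.mp hε
  obtain ⟨O, hO, hOA, hsmall⟩ := hF A hA δ hδ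
  have hclosure : closure F ⊆ {f : X → Y | ∀ x ∈ O ∩ A, ∀ y ∈ O ∩ A, (f x, f y) ∈ δ} :=
    closure_minimal hsmall (isClosed_setOf_forall_apply_pair_mem _ hδ_closed)
  exact ⟨O, hO, hOA, fun g hg x hx y hy => hδε (hclosure hg x hx y hy)⟩
end

section
/- Let F be a compact space, X a Čech-complete space, M a metrizable space, and w : X × F → M a separately continuous map. Then the family of functions {x ↦ w(x, f) : f ∈ F} from X to M is a fragmented family. -/
universe u

/-- A topological space is *Čech-complete* if it embeds as a dense `G_δ` subset of some
compact Hausdorff space. -/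
def CechComplete (X : Type u) [TopologicalSpace X] : Prop :=
  ∃ (K : Type u) (_ : TopologicalSpace K), CompactSpace K ∧ T2Space K ∧
    ∃ e : X → K, Topology.IsEmbedding e ∧ DenseRange e ∧ IsGδ (Set.range e)

/-!
Namioka's argument. Fix `A` and `δ < β`, and call a finite set `D ⊆ X` a control on an open
set `U` if whenever `w(d, f)` and `w(d, g)` are `δ`-close for all `d ∈ D`, then `w(a, f)` and
`w(a, g)` are `β`-close for all `a ∈ U ∩ A`. As `F` is compact, the continuous map
`f ↦ (w(d, f))_{d ∈ D}` has a finite `δ`-net `N`, and a control turns `N` into a finite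
`β`-net for the family on `U ∩ A`; shrinking `U` so that the finitely many `w(·, g)`, `g ∈ N`,
vary little gives fragmentability.

If no open set meeting `A` had a control, then inside a compactification `K` in which `X` is
`⋂ Gₙ` with `Gₙ` open we could choose points `xₙ ∈ A`, pairs `(fₙ, gₙ)` and open sets `Vₙ`
with `closure Vₙ₊₁ ⊆ Vₙ ∩ Gₙ` such that `(fₙ, gₙ)` is `δ`-close at `x₀, …, xₙ₋₁` but
`β`-apart on all of `e⁻¹ Vₙ₊₁ ∋ xₙ`. A cluster point of `(xₙ)` in `K` lies in every `Gₙ`, so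
`(xₙ)` clusters at some `a ∈ X`, where all pairs `(fₙ, gₙ)` are still `β`-apart. But a cluster
pair of `(fₙ, gₙ)` in `F × F` is `δ`-close at every `xᵢ`, hence at `a`, and by continuity in
the second variable so are infinitely many `(fₙ, gₙ)`.
-/

open Set Filter Topology

theorem exists_finset_forall_dist_le {ι F M : Type*} [TopologicalSpace F] [CompactSpace F]
    [MetricSpace M] {w : ι → F → M} (h2 : ∀ i, Continuous (w i)) (D : Finset ι) {δ : ℝ}
    (hδ : 0 < δ) :
    ∃ N : Finset F, ∀ f, ∃ g ∈ N, ∀ d ∈ D, dist (w d f) (w d g) ≤ δ := by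
  let Φ : F → D → M := fun f d => w d f
  have hΦ : Continuous Φ := continuous_pi fun d => h2 d
  obtain ⟨N, hN⟩ := isCompact_univ.elim_finite_subcover (fun g => Φ ⁻¹' Metric.ball (Φ g) δ)
    (fun g => Metric.isOpen_ball.preimage hΦ) (fun f _ => mem_iUnion.2 ⟨f, Metric.mem_ball_self hδ⟩)
  refine ⟨N, fun f => ?_⟩
  obtain ⟨g, hg, hfg⟩ := mem_iUnion₂.1 (hN (mem_univ f))
  exact ⟨g, hg, fun d hd => ((dist_pi_lt_iff hδ).1 hfg ⟨d, hd⟩).le⟩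

section

variable {X F M : Type*} [TopologicalSpace X] [MetricSpace M]

theorem Topology.IsInducing.exists_isOpen_closure_subset {K : Type*} [TopologicalSpace K]
    [RegularSpace K] {e : X → K} (he : IsInducing e) {x : X} {W : Set X} (hW : W ∈ 𝓝 x)
    {V : Set K} (hV : V ∈ 𝓝 (e x)) :
    ∃ V' : Set K, IsOpen V' ∧ e x ∈ V' ∧ closure V' ⊆ V ∧ e ⁻¹' V' ⊆ W := by
  rw [he.nhds_eq_comap] at hW
  obtain ⟨T, hT, hTW⟩ := hW
  obtain ⟨C, hC, hCc, hCVT⟩ := exists_mem_nhds_isClosed_subset (inter_mem hV hT)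
  refine ⟨interior C, isOpen_interior, mem_interior_iff_mem_nhds.2 hC, ?_, ?_⟩
  · exact (closure_minimal interior_subset hCc).trans (hCVT.trans inter_subset_left)
  · exact (preimage_mono (interior_subset.trans (hCVT.trans inter_subset_right))).trans hTW

theorem Topology.IsInducing.exists_mapClusterPt_of_antitone {K : Type*} [TopologicalSpace K]
    [CompactSpace K] {e : X → K} (he : IsInducing e) {V : ℕ → Set K} (hV : Antitone V)
    (hVe : ⋂ n, closure (V n) ⊆ range e) {x : ℕ → X} (hx : ∀ n, e (x n) ∈ V n) :
    ∃ a, MapClusterPt a atTop x := by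
  obtain ⟨y, hy⟩ := exists_clusterPt_of_compactSpace (map (e ∘ x) atTop)
  have hyV : y ∈ ⋂ n, closure (V n) := mem_iInter.2 fun n =>
    isClosed_closure.mem_of_mapClusterPt hy
      (eventually_atTop.2 ⟨n, fun j hj => subset_closure (hV hj (hx j))⟩)
  obtain ⟨a, rfl⟩ := hVe hyV
  exact ⟨a, he.mapClusterPt_iff.1 hy⟩

theorem frequently_lt_of_mapClusterPt [TopologicalSpace F] [CompactSpace F] {φ : X → F → ℝ}
    (h1 : ∀ f, Continuous (φ · f)) (h2 : ∀ x, Continuous (φ x)) {x : ℕ → X} {a : X}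
    (ha : MapClusterPt a atTop x) {f : ℕ → F} {δ η : ℝ}
    (hxf : ∀ i n, i < n → φ (x i) (f n) ≤ δ) (hδη : δ < η) :
    ∃ᶠ n in atTop, φ a (f n) < η := by
  obtain ⟨p, hp⟩ := exists_clusterPt_of_compactSpace (map f atTop)
  have hxp : ∀ i, φ (x i) p ≤ δ := fun i =>
    (isClosed_le (h2 _) continuous_const).mem_of_mapClusterPt hp
      ((eventually_gt_atTop i).mono (hxf i))
  have hap : φ a p ≤ δ :=
    (isClosed_le (h1 p) continuous_const).mem_of_mapClusterPt ha (.of_forall hxp)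
  exact hp.frequently ((isOpen_lt (h2 a) continuous_const).mem_nhds (hap.trans_lt hδη))

theorem Topology.IsInducing.exists_isOpen_closure_subset_forall_lt_dist {K : Type*}
    [TopologicalSpace K] [RegularSpace K] {e : X → K} (he : IsInducing e) {w : X → F → M}
    (h1 : ∀ f, Continuous (w · f)) {A : Set X} {D : Finset X} {δ β : ℝ}
    (hD : ∀ U, IsOpen U → (U ∩ A).Nonempty → ∃ a ∈ U ∩ A, ∃ f g : F,
      (∀ d ∈ D, dist (w d f) (w d g) ≤ δ) ∧ β < dist (w a f) (w a g))
    {V : Set K} (hV : IsOpen V) (hVA : (e ⁻¹' V ∩ A).Nonempty) :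
    ∃ V' : Set K, IsOpen V' ∧ closure V' ⊆ V ∧ ∃ x ∈ A, e x ∈ V' ∧ ∃ f g : F,
      (∀ d ∈ D, dist (w d f) (w d g) ≤ δ) ∧ ∀ z, e z ∈ V' → β < dist (w z f) (w z g) := by
  obtain ⟨x, ⟨hxV, hxA⟩, f, g, hDfg, hx⟩ := hD _ (hV.preimage he.continuous) hVA
  obtain ⟨V', hV', hxV', hV'V, hV'fg⟩ := he.exists_isOpen_closure_subset
    ((isOpen_lt continuous_const ((h1 f).dist (h1 g))).mem_nhds hx) (hV.mem_nhds hxV)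
  exact ⟨V', hV', hV'V, x, hxA, hxV', f, g, hDfg, fun z hz => hV'fg hz⟩

theorem CechComplete.exists_isOpen_finset_control {X : Type u} [TopologicalSpace X]
    (hX : CechComplete X) [TopologicalSpace F] [CompactSpace F] {w : X → F → M}
    (h1 : ∀ f, Continuous (w · f)) (h2 : ∀ x, Continuous (w x)) {A : Set X} (hA : A.Nonempty)
    {δ β : ℝ} (hδβ : δ < β) :
    ∃ U, IsOpen U ∧ (U ∩ A).Nonempty ∧ ∃ D : Finset X, ∀ a ∈ U ∩ A, ∀ f g : F,
      (∀ d ∈ D, dist (w d f) (w d g) ≤ δ) → dist (w a f) (w a g) ≤ β := by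
  classical
  by_contra! hfail
  obtain ⟨K, _, _, _, e, he, -, hGδ⟩ := hX
  obtain ⟨G, hGo, hG⟩ := isGδ_iff_eq_iInter_nat.1 hGδ
  -- states of the construction: the current open set and the points chosen so far
  let S := {p : Set K × Finset X // IsOpen p.1 ∧ (e ⁻¹' p.1 ∩ A).Nonempty}
  have step : ∀ (n : ℕ) (s : S), ∃ (t : S) (x : X) (f g : F),
      closure t.1.1 ⊆ s.1.1 ∩ G n ∧ e x ∈ t.1.1 ∧ s.1.2 ⊆ t.1.2 ∧ x ∈ t.1.2 ∧
      (∀ d ∈ s.1.2, dist (w d f) (w d g) ≤ δ) ∧ ∀ z, e z ∈ t.1.1 → β < dist (w z f) (w z g) := by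
    rintro n ⟨⟨V, D⟩, hV, x, hxV, hxA⟩
    have hxG : e x ∈ G n := mem_iInter.1 (hG ▸ mem_range_self x) n
    obtain ⟨V', hV', hcl, y, hyA, hyV', f, g, hDfg, hfg⟩ :=
      he.isInducing.exists_isOpen_closure_subset_forall_lt_dist h1 (hfail · · · D)
        (hV.inter (hGo n)) ⟨x, ⟨hxV, hxG⟩, hxA⟩
    exact ⟨⟨(V', insert y D), hV', y, hyV', hyA⟩, y, f, g, hcl, hyV',
      Finset.subset_insert y D, Finset.mem_insert_self y D, hDfg, hfg⟩
  choose T x f g hcl hxT hDT hxD hDfg hfg using step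
  let s : ℕ → S := fun n => Nat.rec ⟨(univ, ∅), isOpen_univ, by simpa using hA⟩ T n
  have hV : Antitone fun n => (s n).1.1 :=
    antitone_nat_of_succ_le fun n => subset_closure.trans ((hcl n (s n)).trans inter_subset_left)
  have hxs : ∀ i n, i < n → x i (s i) ∈ (s n).1.2 := fun i n hin =>
    monotone_nat_of_le_succ (fun n => hDT n (s n)) hin (hxD i (s i))
  obtain ⟨a, ha⟩ := he.isInducing.exists_mapClusterPt_of_antitone (V := fun n => (s (n + 1)).1.1)
    (fun m n hmn => hV (Nat.succ_le_succ hmn))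
    (hG ▸ iInter_mono fun n => (hcl n (s n)).trans inter_subset_right) fun n => hxT n (s n)
  have hfar : ∀ n, β ≤ dist (w a (f n (s n))) (w a (g n (s n))) := fun n =>
    (isClosed_le continuous_const ((h1 _).dist (h1 _))).mem_of_mapClusterPt ha
      (eventually_atTop.2 ⟨n, fun j hj =>
        (hfg n (s n) _ (hV (Nat.succ_le_succ hj) (hxT j (s j)))).le⟩)
  obtain ⟨n, hn⟩ := (frequently_lt_of_mapClusterPt (φ := fun z p => dist (w z p.1) (w z p.2))
    (fun p => (h1 p.1).dist (h1 p.2))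
    (fun z => ((h2 z).comp continuous_fst).dist ((h2 z).comp continuous_snd)) ha
    (f := fun n => (f n (s n), g n (s n))) (fun i n hin => hDfg n (s n) _ (hxs i n hin))
    hδβ).exists
  exact (hfar n).not_gt hn

theorem exists_isOpen_forall_dist_le_of_finset {w : X → F → M} (h1 : ∀ f, Continuous (w · f))
    {A U : Set X} (hU : IsOpen U) (hUA : (U ∩ A).Nonempty) {N : Finset F} {ε : ℝ} (hε : 0 < ε)
    (hN : ∀ f, ∃ g ∈ N, ∀ a ∈ U ∩ A, dist (w a f) (w a g) ≤ ε / 4) :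
    ∃ O, IsOpen O ∧ (O ∩ A).Nonempty ∧ ∀ f, ∀ x ∈ O ∩ A, ∀ y ∈ O ∩ A, dist (w x f) (w y f) ≤ ε := by
  obtain ⟨y₀, hy₀U, hy₀A⟩ := hUA
  refine ⟨U ∩ ⋂ g ∈ N, (w · g) ⁻¹' Metric.ball (w y₀ g) (ε / 4),
    hU.inter (isOpen_biInter_finset fun g _ => Metric.isOpen_ball.preimage (h1 g)),
    ⟨y₀, ⟨hy₀U, mem_iInter₂.2 fun g _ => Metric.mem_ball_self (by positivity)⟩, hy₀A⟩, ?_⟩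
  rintro f x ⟨⟨hxU, hxN⟩, hxA⟩ y ⟨⟨hyU, hyN⟩, hyA⟩
  obtain ⟨g, hg, hfg⟩ := hN f
  have hx : dist (w x g) (w y₀ g) < ε / 4 := mem_iInter₂.1 hxN g hg
  have hy : dist (w y g) (w y₀ g) < ε / 4 := mem_iInter₂.1 hyN g hg
  calc dist (w x f) (w y f) ≤ dist (w x f) (w x g) + dist (w x g) (w y g) + dist (w y g) (w y f) :=
        dist_triangle4 _ _ _ _
    _ ≤ dist (w x f) (w x g) + (dist (w x g) (w y₀ g) + dist (w y g) (w y₀ g)) +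
        dist (w y f) (w y g) := by
        gcongr
        · exact dist_triangle_right _ _ _
        · exact (dist_comm _ _).le
    _ ≤ ε := by linarith [hfg x ⟨hxU, hxA⟩, hfg y ⟨hyU, hyA⟩]

end

/-- If `F` is compact, `X` is Čech-complete, `M` metric and `w : X × F → M` is separately
continuous, then the family `{x ↦ w (x, f) : f ∈ F}` is a fragmented family of maps
`X → M`. -/
theorem fragmentedFamily_of_separatelyContinuous {X : Type u} {F M : Type*}
    [TopologicalSpace X] (hX : CechComplete X)
    [TopologicalSpace F] [CompactSpace F] [MetricSpace M]
    (w : X × F → M)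
    (h1 : ∀ f : F, Continuous fun x : X => w (x, f))
    (h2 : ∀ x : X, Continuous fun f : F => w (x, f)) :
    ∀ A : Set X, A.Nonempty → ∀ ε > (0 : ℝ), ∃ O : Set X, IsOpen O ∧ (O ∩ A).Nonempty ∧
      ∀ f : F, ∀ x ∈ O ∩ A, ∀ y ∈ O ∩ A, dist (w (x, f)) (w (y, f)) ≤ ε := by
  intro A hA ε hε
  obtain ⟨U, hU, hUA, D, hD⟩ := hX.exists_isOpen_finset_control (w := fun x f => w (x, f)) h1 h2
    hA (by linarith : ε / 8 < ε / 4)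
  obtain ⟨N, hN⟩ := exists_finset_forall_dist_le (w := fun x f => w (x, f)) h2 D
    (by positivity : 0 < ε / 8)
  refine exists_isOpen_forall_dist_le_of_finset (N := N) h1 hU hUA hε fun f => ?_
  obtain ⟨g, hg, hfg⟩ := hN f
  exact ⟨g, hg, fun a ha => hD a ha f g hfg⟩
end

section
/- Let X be a Polish space and F ⊆ C(X) a uniformly bounded family of continuous real-valued functions. If the pointwise closure of F in ℝ^X is contained in C(X), then this pointwise closure is a compact metrizable subspace of ℝ^X. -/
/-!
The closure lies in the compact box `[-C, C]^X`, so it is compact. Restricting to a countable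
dense subset `D ⊆ X` is continuous, and injective on continuous functions; on the compact closure
it is therefore an embedding into the metrizable space `ℝ^D`.
-/

open Set TopologicalSpace

lemma isCompact_closure_of_forall_abs_le {X : Type*} (F : Set (X → ℝ)) (C : ℝ)
    (hbd : ∀ f ∈ F, ∀ x, |f x| ≤ C) : IsCompact (closure F) := by
  have hbox : F ⊆ pi univ fun _ => Icc (-C) C := fun f hf x _ => abs_le.mp (hbd f hf x)
  exact (isCompact_univ_pi fun _ => isCompact_Icc).of_isClosed_subset isClosed_closure
    (closure_minimal hbox (isClosed_set_pi fun _ _ => isClosed_Icc))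

lemma injOn_domRestrict_of_dense {X Y : Type*} [TopologicalSpace X] [TopologicalSpace Y] [T2Space Y]
    {D : Set X} (hD : Dense D) : InjOn D.domRestrict {g : X → Y | Continuous g} :=
  fun _ hg _ hh hgh => Continuous.ext_on hD hg hh fun d hd => congrFun hgh ⟨d, hd⟩

lemma metrizableSpace_of_isCompact_of_forall_continuous {X Y : Type*} [TopologicalSpace X]
    [SeparableSpace X] [MetricSpace Y] {S : Set (X → Y)}
    (hS : IsCompact S) (hcont : ∀ g ∈ S, Continuous g) : MetrizableSpace S := by
  obtain ⟨D, hDc, hDd⟩ := exists_countable_dense X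
  have : Countable D := hDc.to_subtype
  have : CompactSpace S := isCompact_iff_compactSpace.mp hS
  have hrestrict : Continuous fun g : S => D.domRestrict (g : X → Y) :=
    (Pi.continuous_domRestrict D).comp continuous_subtype_val
  have hinj : Function.Injective fun g : S => D.domRestrict (g : X → Y) := fun g h hgh =>
    Subtype.ext (injOn_domRestrict_of_dense hDd (hcont g g.2) (hcont h h.2) hgh)
  exact (hrestrict.isClosedEmbedding hinj).isEmbedding.metrizableSpace

theorem closure_compact_metrizable_of_closure_continuous_general {X : Type*} [TopologicalSpace X]
    [PolishSpace X] (F : Set (X → ℝ))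
    (C : ℝ) (hbd : ∀ f ∈ F, ∀ x, |f x| ≤ C)
    (hcl : ∀ g ∈ closure F, Continuous g) :
    IsCompact (closure F) ∧ TopologicalSpace.MetrizableSpace (closure F : Set (X → ℝ)) :=
  have hcompact := isCompact_closure_of_forall_abs_le F C hbd
  ⟨hcompact, metrizableSpace_of_isCompact_of_forall_continuous hcompact hcl⟩

/-- Let `X` be a Polish space and `F` a uniformly bounded family of continuous real-valued
functions on `X`. If the pointwise closure of `F` in `ℝ^X` consists of continuous
functions, then this closure is a compact metrizable subspace of `ℝ^X`. -/
theorem closure_compact_metrizable_of_closure_continuous {X : Type*} [TopologicalSpace X]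
    [PolishSpace X] (F : Set (X → ℝ)) (hcont : ∀ f ∈ F, Continuous f)
    (C : ℝ) (hbd : ∀ f ∈ F, ∀ x, |f x| ≤ C)
    (hcl : ∀ g ∈ closure F, Continuous g) :
    IsCompact (closure F) ∧ TopologicalSpace.MetrizableSpace (closure F : Set (X → ℝ)) :=
  closure_compact_metrizable_of_closure_continuous_general F C hbd hcl
end

section
/- Let X be a Polish space and F ⊆ C(X) a uniformly bounded family of continuous real-valued functions on X. If F is a fragmented family, then every function in the pointwise closure of F in ℝ^X is of Baire class 1. -/
/-!
A function `g` in the pointwise closure of a fragmented family is itself fragmented. On a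
second countable metric space, fragmentation of `g` makes the open set of points having a
neighbourhood covered by countably many closed sets of `g`-oscillation `≤ ε` the whole space:
otherwise fragmentation applied to its closed complement produces a further such point.
Choosing one value of `g` on each closed set and taking the first set containing `x` gives an
`ε`-approximation of `g` that is an eventual limit of continuous functions (first-fit
combinations of continuous bumps). Pointwise limits of continuous functions are closed under
uniform limits, by Tannery's theorem applied to a telescoping series.
-/

open Filter

/-- A family `F` of real-valued functions on a topological space `X` is a *fragmented
family* if for every nonempty `A ⊆ X` and `ε > 0` there is an open `O` with `O ∩ A`
nonempty such that `f (O ∩ A)` has diameter at most `ε` for every `f ∈ F`. -/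
def FragmentedFamilyR {X : Type*} [TopologicalSpace X] (F : Set (X → ℝ)) : Prop :=
  ∀ A : Set X, A.Nonempty → ∀ ε > (0 : ℝ), ∃ O : Set X, IsOpen O ∧ (O ∩ A).Nonempty ∧
    ∀ f ∈ F, ∀ x ∈ O ∩ A, ∀ y ∈ O ∩ A, |f x - f y| ≤ ε

open Set Topology Metric

section

variable {X : Type*}

def IsPointwiseLimitOfContinuous [TopologicalSpace X] (g : X → ℝ) : Prop :=
  ∃ u : ℕ → X → ℝ, (∀ n, Continuous (u n)) ∧ ∀ x, Tendsto (fun n => u n x) atTop (𝓝 (g x))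

namespace IsPointwiseLimitOfContinuous

variable [TopologicalSpace X] {g h : X → ℝ}

theorem sub (hg : IsPointwiseLimitOfContinuous g) (hh : IsPointwiseLimitOfContinuous h) :
    IsPointwiseLimitOfContinuous (g - h) := by
  obtain ⟨u, hu_cont, hu_lim⟩ := hg
  obtain ⟨v, hv_cont, hv_lim⟩ := hh
  exact ⟨u - v, fun n => (hu_cont n).sub (hv_cont n), fun x => (hu_lim x).sub (hv_lim x)⟩

theorem exists_abs_le (hg : IsPointwiseLimitOfContinuous g) {B : ℝ} (hB : ∀ x, |g x| ≤ B) :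
    ∃ u : ℕ → X → ℝ, (∀ n, Continuous (u n)) ∧
      (∀ x, Tendsto (fun n => u n x) atTop (𝓝 (g x))) ∧ ∀ n x, |u n x| ≤ B := by
  obtain ⟨u, hu_cont, hu_lim⟩ := hg
  refine ⟨fun n x => max (-B) (min B (u n x)), fun n => by fun_prop, fun x => ?_, fun n x => ?_⟩
  · have hgx := abs_le.1 (hB x)
    have := (tendsto_const_nhds (x := -B)).max ((tendsto_const_nhds (x := B)).min (hu_lim x))
    rwa [min_eq_right hgx.2, max_eq_right hgx.1] at this
  · exact abs_le.2 ⟨le_max_left _ _, max_le (by linarith [(abs_nonneg (g x)).trans (hB x)])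
      (min_le_left _ _)⟩

theorem of_forall_exists_abs_sub_le
    (H : ∀ ε > 0, ∃ h, IsPointwiseLimitOfContinuous h ∧ ∀ x, |h x - g x| ≤ ε) :
    IsPointwiseLimitOfContinuous g := by
  choose h hh hhg using fun n : ℕ => H ((1 / 2) ^ n) (by positivity)
  have hd_bound (n : ℕ) (x : X) : |h (n + 1) x - h n x| ≤ 2 * (1 / 2) ^ n := by
    have h₁ := abs_le.1 (hhg (n + 1) x)
    have h₂ := abs_le.1 (hhg n x)
    rw [pow_succ] at h₁
    exact abs_le.2 ⟨by linarith, by linarith⟩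
  have hbound_summable : Summable fun n : ℕ => 2 * (1 / 2 : ℝ) ^ n :=
    summable_geometric_two.mul_left 2
  have h_tendsto (x : X) : Tendsto (fun n => h n x) atTop (𝓝 (g x)) := by
    refine tendsto_iff_dist_tendsto_zero.2 (squeeze_zero (fun _ => dist_nonneg) (fun n => ?_)
      (tendsto_pow_atTop_nhds_zero_of_lt_one (by norm_num) (by norm_num : (1 / 2 : ℝ) < 1)))
    exact (Real.dist_eq _ _).trans_le (hhg n x)
  have h_telescope (x : X) : HasSum (fun n => h (n + 1) x - h n x) (g x - h 0 x) := by
    refine (hasSum_iff_tendsto_nat_of_summable_norm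
      (hbound_summable.of_nonneg_of_le (fun _ => norm_nonneg _) (fun n => hd_bound n x))).2 ?_
    simpa only [Finset.sum_range_sub (fun n => h n x)] using (h_tendsto x).sub_const (h 0 x)
  choose w hw_cont hw_lim hw_bound using fun n => ((hh (n + 1)).sub (hh n)).exists_abs_le
    (hd_bound n)
  obtain ⟨v, hv_cont, hv_lim⟩ := hh 0
  refine ⟨fun m x => v m x + ∑' n, w n m x,
    fun m => (hv_cont m).add (continuous_tsum (fun n => hw_cont n m) hbound_summable
      (fun n x => hw_bound n m x)), fun x => ?_⟩
  have hw_sum := tendsto_tsum_of_dominated_convergence hbound_summable (fun n => hw_lim n x)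
    (Eventually.of_forall fun m n => hw_bound n m x)
  simpa [(h_telescope x).tsum_eq] using (hv_lim x).add hw_sum

end IsPointwiseLimitOfContinuous

section PseudoMetric

variable [PseudoMetricSpace X]

theorem IsClosed.exists_continuous_eventually_eq_indicator {K : Set X} (hK : IsClosed K) :
    ∃ t : ℕ → X → ℝ, (∀ m, Continuous (t m)) ∧
      ∀ x, ∀ᶠ m in atTop, t m x = K.indicator 1 x := by
  -- `infDist x ∅ = 0`, so the empty set is treated separately
  rcases K.eq_empty_or_nonempty with rfl | hne
  · exact ⟨0, fun _ => continuous_const, fun x => by simp⟩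
  refine ⟨fun m x => 1 - min 1 (m * infDist x K), fun m => by fun_prop, fun x => ?_⟩
  by_cases hx : x ∈ K
  · simp [hx, infDist_zero_of_mem hx]
  · have hpos : 0 < infDist x K := (hK.notMem_iff_infDist_pos hne).1 hx
    filter_upwards [(tendsto_natCast_atTop_atTop.atTop_mul_const hpos).eventually_ge_atTop 1]
      with m hm
    simp [hx, min_eq_left hm]

/-- With continuous `t j` eventually equal to the indicator of `K j`, the first-fit weights
`t k * ∏ j < k, (1 - t j)` are eventually the indicator of `k` being the first index with
`x ∈ K k`. -/
theorem isPointwiseLimitOfContinuous_comp_sInf {K : ℕ → Set X} (hK : ∀ k, IsClosed (K k))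
    (hcov : ∀ x, ∃ k, x ∈ K k) (c : ℕ → ℝ) :
    IsPointwiseLimitOfContinuous fun x => c (sInf {k | x ∈ K k}) := by
  choose t ht_cont ht_lim using fun k => (hK k).exists_continuous_eventually_eq_indicator
  refine ⟨fun m x => ∑ k ∈ Finset.range m, c k * (t k m x * ∏ j ∈ Finset.range k, (1 - t j m x)),
    fun m => by fun_prop, fun x => tendsto_const_nhds.congr' ?_⟩
  set k₀ := sInf {k | x ∈ K k}
  have hk₀ : x ∈ K k₀ := Nat.sInf_mem (hcov x)
  filter_upwards [(Finset.range (k₀ + 1)).eventually_all.2 fun j _ => ht_lim j x,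
    eventually_gt_atTop k₀] with m hm hm_gt
  have ht_k₀ : t k₀ m x = 1 := by simp [hm k₀ (by simp), hk₀]
  have ht_lt (j : ℕ) (hj : j < k₀) : t j m x = 0 := by
    have hx : x ∉ K j := Nat.notMem_of_lt_sInf hj
    simp [hm j (by simp; omega), hx]
  rw [Finset.sum_eq_single_of_mem k₀ (Finset.mem_range.2 hm_gt)]
  · rw [ht_k₀, Finset.prod_eq_one fun j hj => by rw [ht_lt j (Finset.mem_range.1 hj), sub_zero],
      one_mul, mul_one]
  · intro k _ hk
    rcases hk.lt_or_gt with hk | hk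
    · rw [ht_lt k hk, zero_mul, mul_zero]
    · rw [Finset.prod_eq_zero (Finset.mem_range.2 hk) (by rw [ht_k₀, sub_self]), mul_zero,
        mul_zero]

theorem exists_isPointwiseLimitOfContinuous_abs_sub_le {g : X → ℝ}
    {ε : ℝ} {𝒦 : Set (Set X)} (h𝒦 : 𝒦.Countable) (h𝒦_closed : ∀ K ∈ 𝒦, IsClosed K)
    (h𝒦_osc : ∀ K ∈ 𝒦, ∀ x ∈ K, ∀ y ∈ K, |g x - g y| ≤ ε) (h𝒦_cover : ⋃₀ 𝒦 = univ) :
    ∃ h, IsPointwiseLimitOfContinuous h ∧ ∀ x, |h x - g x| ≤ ε := by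
  obtain ⟨K, hK⟩ := (h𝒦.insert ∅).exists_eq_range (insert_nonempty _ _)
  have hK_mem (k : ℕ) : K k = ∅ ∨ K k ∈ 𝒦 := by
    rw [← mem_insert_iff, hK]
    exact mem_range_self k
  have hK_closed (k : ℕ) : IsClosed (K k) := by
    rcases hK_mem k with hk | hk
    · exact hk ▸ isClosed_empty
    · exact h𝒦_closed _ hk
  have hK_cover (x : X) : ∃ k, x ∈ K k := by
    obtain ⟨S, hS, hx⟩ := mem_sUnion.1 (h𝒦_cover ▸ mem_univ x)
    obtain ⟨k, rfl⟩ : S ∈ range K := hK ▸ mem_insert_of_mem _ hS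
    exact ⟨k, hx⟩
  have hK_value (k : ℕ) : ∃ c, ∀ x ∈ K k, |c - g x| ≤ ε := by
    rcases (K k).eq_empty_or_nonempty with he | ⟨y, hy⟩
    · exact ⟨0, by simp [he]⟩
    · exact ⟨g y, h𝒦_osc _ ((hK_mem k).resolve_left (nonempty_of_mem hy).ne_empty) y hy⟩
  choose c hc using hK_value
  exact ⟨_, isPointwiseLimitOfContinuous_comp_sInf hK_closed hK_cover c,
    fun x => hc _ x (Nat.sInf_mem (hK_cover x))⟩

end PseudoMetric

theorem FragmentedFamilyR.closure [TopologicalSpace X] {F : Set (X → ℝ)}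
    (hF : FragmentedFamilyR F) : FragmentedFamilyR (closure F) := by
  intro A hA ε hε
  obtain ⟨O, hO, hOA, hosc⟩ := hF A hA ε hε
  refine ⟨O, hO, hOA, fun f hf x hx y hy => ?_⟩
  have hclosed : IsClosed {f : X → ℝ | |f x - f y| ≤ ε} :=
    isClosed_le (by fun_prop) continuous_const
  exact closure_minimal (fun f hf => hosc f hf x hx y hy) hclosed hf

def IsSigmaSmall [TopologicalSpace X] (F : Set (X → ℝ)) (ε : ℝ) (S : Set X) : Prop :=
  ∃ 𝒦 : Set (Set X), 𝒦.Countable ∧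
    (∀ K ∈ 𝒦, IsClosed K ∧ ∀ f ∈ F, ∀ x ∈ K, ∀ y ∈ K, |f x - f y| ≤ ε) ∧ S ⊆ ⋃₀ 𝒦

section SigmaSmall

variable {F : Set (X → ℝ)} {ε : ℝ}

theorem IsSigmaSmall.mono [TopologicalSpace X] {S T : Set X} (hT : IsSigmaSmall F ε T)
    (hST : S ⊆ T) : IsSigmaSmall F ε S :=
  let ⟨𝒦, h𝒦, h𝒦_small, hT𝒦⟩ := hT
  ⟨𝒦, h𝒦, h𝒦_small, hST.trans hT𝒦⟩

theorem IsSigmaSmall.union [TopologicalSpace X] {S T : Set X} (hS : IsSigmaSmall F ε S)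
    (hT : IsSigmaSmall F ε T) : IsSigmaSmall F ε (S ∪ T) := by
  obtain ⟨𝒦, h𝒦, h𝒦_small, hS𝒦⟩ := hS
  obtain ⟨ℒ, hℒ, hℒ_small, hTℒ⟩ := hT
  refine ⟨𝒦 ∪ ℒ, h𝒦.union hℒ, fun K hK => hK.elim (h𝒦_small K) (hℒ_small K), ?_⟩
  rw [sUnion_union]
  exact union_subset_union hS𝒦 hTℒ

theorem isSigmaSmall_sUnion [TopologicalSpace X] {𝒮 : Set (Set X)} (h𝒮 : 𝒮.Countable)
    (hsmall : ∀ S ∈ 𝒮, IsSigmaSmall F ε S) : IsSigmaSmall F ε (⋃₀ 𝒮) := by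
  choose! 𝒦 h𝒦 h𝒦_small hS𝒦 using hsmall
  refine ⟨⋃ S ∈ 𝒮, 𝒦 S, h𝒮.biUnion h𝒦, fun K hK => ?_, fun x hx => ?_⟩
  · obtain ⟨S, hS, hK⟩ := mem_iUnion₂.1 hK
    exact h𝒦_small S hS K hK
  · obtain ⟨S, hS, hx⟩ := mem_sUnion.1 hx
    obtain ⟨K, hK, hxK⟩ := mem_sUnion.1 (hS𝒦 S hS hx)
    exact mem_sUnion.2 ⟨K, mem_iUnion₂.2 ⟨S, hS, hK⟩, hxK⟩

theorem isSigmaSmall_inter_of_isClosed [PseudoEMetricSpace X] {O A : Set X} (hO : IsOpen O)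
    (hA : IsClosed A) (hosc : ∀ f ∈ F, ∀ x ∈ O ∩ A, ∀ y ∈ O ∩ A, |f x - f y| ≤ ε) :
    IsSigmaSmall F ε (O ∩ A) := by
  obtain ⟨C, hC_closed, hC_sub, hC_union, -⟩ := hO.exists_iUnion_isClosed
  refine ⟨range fun n => C n ∩ A, countable_range _, ?_, ?_⟩
  · rintro _ ⟨n, rfl⟩
    exact ⟨(hC_closed n).inter hA, fun f hf x hx y hy =>
      hosc f hf x ⟨hC_sub n hx.1, hx.2⟩ y ⟨hC_sub n hy.1, hy.2⟩⟩
  · rintro x ⟨hxO, hxA⟩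
    obtain ⟨n, hn⟩ := mem_iUnion.1 (hC_union ▸ hxO)
    exact mem_sUnion.2 ⟨_, ⟨n, rfl⟩, hn, hxA⟩

theorem FragmentedFamilyR.isSigmaSmall_univ [PseudoEMetricSpace X] [SecondCountableTopology X]
    (hF : FragmentedFamilyR F) (hε : 0 < ε) : IsSigmaSmall F ε (univ : Set X) := by
  obtain ⟨𝒯, h𝒯, h𝒯_sub, h𝒯_eq⟩ := TopologicalSpace.isOpen_sUnion_countable
    {O : Set X | IsOpen O ∧ IsSigmaSmall F ε O} fun O hO => hO.1
  set G := ⋃₀ 𝒯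
  have hG_open : IsOpen G := isOpen_sUnion fun O hO => (h𝒯_sub hO).1
  have hG_small : IsSigmaSmall F ε G := isSigmaSmall_sUnion h𝒯 fun O hO => (h𝒯_sub hO).2
  by_contra hG_ne
  obtain ⟨O, hO, hO_ne, hosc⟩ :=
    hF Gᶜ (nonempty_compl.2 fun h => hG_ne (h ▸ hG_small)) ε hε
  have hO_small : IsSigmaSmall F ε O :=
    (hG_small.union (isSigmaSmall_inter_of_isClosed hO hG_open.isClosed_compl hosc)).mono
      fun x hx => (em (x ∈ G)).imp id fun h => ⟨hx, h⟩
  obtain ⟨x, hxO, hxG⟩ := hO_ne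
  have hO_mem : O ∈ {O : Set X | IsOpen O ∧ IsSigmaSmall F ε O} := ⟨hO, hO_small⟩
  exact hxG (h𝒯_eq ▸ subset_sUnion_of_mem hO_mem hxO)

end SigmaSmall

end

theorem baireOne_of_fragmentedFamily_closure_general {X : Type*} [TopologicalSpace X]
    [PolishSpace X] (F : Set (X → ℝ)) (hfrag : FragmentedFamilyR F) :
    ∀ g ∈ closure F, ∃ u : ℕ → X → ℝ, (∀ n, Continuous (u n)) ∧
      ∀ x, Tendsto (fun n => u n x) atTop (nhds (g x)) := by
  intro g hg
  let := TopologicalSpace.pseudoMetrizableSpacePseudoMetric X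
  refine IsPointwiseLimitOfContinuous.of_forall_exists_abs_sub_le fun ε hε => ?_
  obtain ⟨𝒦, h𝒦, h𝒦_small, h𝒦_cover⟩ := hfrag.closure.isSigmaSmall_univ hε
  exact exists_isPointwiseLimitOfContinuous_abs_sub_le h𝒦 (fun K hK => (h𝒦_small K hK).1)
    (fun K hK => (h𝒦_small K hK).2 g hg) (univ_subset_iff.1 h𝒦_cover)

/-- Let `X` be Polish and `F` a uniformly bounded fragmented family of continuous
real-valued functions on `X`. Then every function in the pointwise closure of `F` in
`ℝ^X` is of Baire class 1 (equivalently, on the Polish space `X`, a pointwise limit of a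
sequence of continuous functions). -/
theorem baireOne_of_fragmentedFamily_closure {X : Type*} [TopologicalSpace X]
    [PolishSpace X] (F : Set (X → ℝ)) (hcont : ∀ f ∈ F, Continuous f)
    (C : ℝ) (hbd : ∀ f ∈ F, ∀ x, |f x| ≤ C) (hfrag : FragmentedFamilyR F) :
    ∀ g ∈ closure F, ∃ u : ℕ → X → ℝ, (∀ n, Continuous (u n)) ∧
      ∀ x, Tendsto (fun n => u n x) atTop (nhds (g x)) :=
  baireOne_of_fragmentedFamily_closure_general F hfrag
end

section
/- Let X be a compact metric space and A ⊆ bB₁(X) a uniformly bounded set of bounded Baire 1 functions. The map T sending f to the functional μ ↦ ∫ f dμ on the unit ball B* of C(X)*, is well-defined (each T(f) is a bounded Baire 1 function on B* with the weak* topology), injective, and sequentially continuous on A with respect to pointwise convergence topologies. -/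
open MeasureTheory Filter

/-- A real-valued function on a topological space is *Baire class 1* (in the sense of
pointwise limits) if it is a pointwise limit of a sequence of continuous functions. -/
def BaireOne {Z : Type*} [TopologicalSpace Z] (g : Z → ℝ) : Prop :=
  ∃ u : ℕ → Z → ℝ, (∀ n, Continuous (u n)) ∧
    ∀ z, Tendsto (fun n => u n z) atTop (nhds (g z))

/-- The unit ball `B*` of `C(X)*`, realized via the Riesz representation as the set of
signed Borel measures of total variation at most `1`, here modeled as pairs of (positive)
measures `(μ⁺, μ⁻)` with `μ⁺(X) + μ⁻(X) ≤ 1`. -/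
def Bstar (X : Type*) [TopologicalSpace X] [MeasurableSpace X] :=
  { p : Measure X × Measure X // p.1 Set.univ + p.2 Set.univ ≤ 1 }

/-- The weak* topology on `B*`: the topology of pointwise convergence on `C(X, ℝ)`. -/
noncomputable instance Bstar.topologicalSpace (X : Type*) [TopologicalSpace X] [MeasurableSpace X] :
    TopologicalSpace (Bstar X) :=
  TopologicalSpace.induced
    (fun p : Bstar X => fun g : C(X, ℝ) => (∫ x, g x ∂p.1.1) - ∫ x, g x ∂p.1.2)
    inferInstance

/-- The natural map `T : bB₁(X) → bB₁(B*)`, `f ↦ (μ ↦ ∫ f dμ)`. -/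
noncomputable def Tmap {X : Type*} [TopologicalSpace X] [MeasurableSpace X]
    (f : X → ℝ) (p : Bstar X) : ℝ :=
  (∫ x, f x ∂p.1.1) - ∫ x, f x ∂p.1.2

/-!
Truncating the continuous approximants of a bounded Baire 1 function `f` at the bound of `f`
keeps them convergent to `f` and makes them uniformly bounded. Each `Tmap` of a continuous
function is weak* continuous on `B*` by the very definition of the weak* topology, and dominated
convergence carries pointwise convergence of uniformly bounded measurable functions over to
their integrals against both parts of any `p ∈ B*`; this gives both the Baire 1 property of
`Tmap f` and the sequential continuity on `A`. Injectivity follows by testing against the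
point masses `δₓ ∈ B*`.
-/

section BaireOne

variable {Z : Type*} [TopologicalSpace Z] {f : Z → ℝ}

theorem BaireOne.measurable [MeasurableSpace Z] [OpensMeasurableSpace Z] (hf : BaireOne f) :
    Measurable f := by
  obtain ⟨u, hu, hlim⟩ := hf
  exact measurable_of_tendsto_metrizable (fun n => (hu n).measurable) (tendsto_pi_nhds.mpr hlim)

theorem BaireOne.exists_abs_le_tendsto (hf : BaireOne f) {c : ℝ} (hc : 0 ≤ c)
    (hfc : ∀ z, |f z| ≤ c) :
    ∃ u : ℕ → Z → ℝ, (∀ n, Continuous (u n)) ∧ (∀ n z, |u n z| ≤ c) ∧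
      ∀ z, Tendsto (fun n => u n z) atTop (nhds (f z)) := by
  obtain ⟨u, hu, hlim⟩ := hf
  let clamp : ℝ → ℝ := fun t => Set.projIcc (-c) c (neg_le_self hc) t
  have hclamp : Continuous clamp := continuous_subtype_val.comp continuous_projIcc
  have hclamp_f : ∀ z, clamp (f z) = f z := fun z =>
    congrArg Subtype.val (Set.projIcc_of_mem _ (abs_le.mp (hfc z)))
  refine ⟨fun n z => clamp (u n z), fun n => hclamp.comp (hu n),
    fun n z => abs_le.mpr (Set.projIcc (-c) c _ (u n z)).2, fun z => ?_⟩
  rw [← hclamp_f z]; exact (hclamp.tendsto (f z)).comp (hlim z)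

end BaireOne

namespace Bstar

variable {X : Type*} [TopologicalSpace X] [MeasurableSpace X]

theorem real_univ_add_le_one (p : Bstar X) :
    p.1.1.real Set.univ + p.1.2.real Set.univ ≤ 1 := by
  have hfin : p.1.1 Set.univ + p.1.2 Set.univ ≠ ⊤ := ne_top_of_le_ne_top ENNReal.one_ne_top p.2
  rw [measureReal_def, measureReal_def, ← ENNReal.toReal_add (ENNReal.add_ne_top.mp hfin).1
    (ENNReal.add_ne_top.mp hfin).2]
  exact ENNReal.toReal_le_of_le_ofReal zero_le_one (by simpa using p.2)

instance isFiniteMeasure_fst (p : Bstar X) : IsFiniteMeasure p.1.1 :=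
  ⟨(le_self_add.trans p.2).trans_lt ENNReal.one_lt_top⟩

instance isFiniteMeasure_snd (p : Bstar X) : IsFiniteMeasure p.1.2 :=
  ⟨(le_add_self.trans p.2).trans_lt ENNReal.one_lt_top⟩

noncomputable def dirac (x : X) : Bstar X :=
  ⟨(Measure.dirac x, 0), by simp⟩

end Bstar

section Tmap

variable {X : Type*} [TopologicalSpace X] [MeasurableSpace X]

theorem continuous_Tmap (g : C(X, ℝ)) : Continuous (Tmap g : Bstar X → ℝ) :=
  (continuous_apply g).comp (continuous_induced_dom :
    Continuous fun p : Bstar X => fun g : C(X, ℝ) => (∫ x, g x ∂p.1.1) - ∫ x, g x ∂p.1.2)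

theorem abs_Tmap_le {f : X → ℝ} {c : ℝ} (hc : 0 ≤ c) (hfc : ∀ x, |f x| ≤ c) (p : Bstar X) :
    |Tmap f p| ≤ c := by
  have hbound : ∀ μ : Measure X, [IsFiniteMeasure μ] → |∫ x, f x ∂μ| ≤ c * μ.real Set.univ :=
    fun μ _ => by
      simpa only [Real.norm_eq_abs] using norm_integral_le_of_norm_le_const (μ := μ)
        (Eventually.of_forall fun x => (Real.norm_eq_abs (f x)).trans_le (hfc x))
  calc |Tmap f p| ≤ |∫ x, f x ∂p.1.1| + |∫ x, f x ∂p.1.2| := abs_sub _ _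
    _ ≤ c * (p.1.1.real Set.univ + p.1.2.real Set.univ) := by
      rw [mul_add]; exact add_le_add (hbound _) (hbound _)
    _ ≤ c := mul_le_of_le_one_right hc p.real_univ_add_le_one

theorem tendsto_Tmap_of_abs_le {u : ℕ → X → ℝ} {f : X → ℝ} (hu : ∀ n, Measurable (u n))
    {c : ℝ} (huc : ∀ n x, |u n x| ≤ c) (hlim : ∀ x, Tendsto (fun n => u n x) atTop (nhds (f x)))
    (p : Bstar X) : Tendsto (fun n => Tmap (u n) p) atTop (nhds (Tmap f p)) := by
  have hdom : ∀ μ : Measure X, [IsFiniteMeasure μ] →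
      Tendsto (fun n => ∫ x, u n x ∂μ) atTop (nhds (∫ x, f x ∂μ)) := fun μ _ =>
    tendsto_integral_of_dominated_convergence (fun _ => c)
      (fun n => (hu n).aestronglyMeasurable) (integrable_const c)
      (fun n => Eventually.of_forall (huc n)) (Eventually.of_forall hlim)
  exact (hdom p.1.1).sub (hdom p.1.2)

theorem baireOne_Tmap [OpensMeasurableSpace X] {f : X → ℝ} (hf : BaireOne f) {c : ℝ}
    (hc : 0 ≤ c) (hfc : ∀ x, |f x| ≤ c) : BaireOne (Tmap f) := by
  obtain ⟨u, hu, huc, hlim⟩ := hf.exists_abs_le_tendsto hc hfc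
  exact ⟨fun n => Tmap (u n), fun n => continuous_Tmap ⟨u n, hu n⟩,
    tendsto_Tmap_of_abs_le (fun n => (hu n).measurable) huc hlim⟩

theorem Tmap_dirac [MeasurableSingletonClass X] (f : X → ℝ) (x : X) :
    Tmap f (Bstar.dirac x) = f x := by
  simp [Tmap, Bstar.dirac, integral_dirac]

theorem Tmap_injective [MeasurableSingletonClass X] :
    Function.Injective (Tmap : (X → ℝ) → Bstar X → ℝ) := fun f g hfg =>
  funext fun x => by rw [← Tmap_dirac f x, ← Tmap_dirac g x, hfg]

end Tmap

theorem Tmap_wellDefined_injective_seqContinuous_general {X : Type*} [MetricSpace X]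
    [MeasurableSpace X] [BorelSpace X]
    (A : Set (X → ℝ)) (hA1 : ∀ f ∈ A, BaireOne f)
    (C : ℝ) (hA2 : ∀ f ∈ A, ∀ x, |f x| ≤ C) :
    (∀ f : X → ℝ, BaireOne f → (∃ c, ∀ x, |f x| ≤ c) →
      BaireOne (Tmap f) ∧ ∃ c, ∀ p : Bstar X, |Tmap f p| ≤ c) ∧
    (∀ f g : X → ℝ, BaireOne f → (∃ c, ∀ x, |f x| ≤ c) →
      BaireOne g → (∃ c, ∀ x, |g x| ≤ c) → Tmap f = Tmap g → f = g) ∧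
    (∀ (f : ℕ → X → ℝ) (g : X → ℝ), (∀ n, f n ∈ A) → g ∈ A →
      (∀ x, Tendsto (fun n => f n x) atTop (nhds (g x))) →
      ∀ p : Bstar X, Tendsto (fun n => Tmap (f n) p) atTop (nhds (Tmap g p))) := by
  refine ⟨fun f hf ⟨c, hfc⟩ => ?_, fun f g _ _ _ _ hfg => Tmap_injective hfg,
    fun f g hfA _ hlim => tendsto_Tmap_of_abs_le (fun n => (hA1 _ (hfA n)).measurable)
      (fun n => hA2 _ (hfA n)) hlim⟩
  have hfc' : ∀ x, |f x| ≤ max c 0 := fun x => (hfc x).trans (le_max_left c 0)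
  exact ⟨baireOne_Tmap hf (le_max_right c 0) hfc', max c 0, abs_Tmap_le (le_max_right c 0) hfc'⟩

/-- Let `X` be compact metric and `A` a uniformly bounded set of bounded Baire 1 functions
on `X`. Then `T : f ↦ (μ ↦ ∫ f dμ)` is well defined (sends bounded Baire 1 functions on
`X` to bounded Baire 1 functions on `B*`), injective on bounded Baire 1 functions, and is
sequentially continuous on `A` with respect to the pointwise convergence topologies. -/
theorem Tmap_wellDefined_injective_seqContinuous {X : Type*} [MetricSpace X]
    [CompactSpace X] [MeasurableSpace X] [BorelSpace X]
    (A : Set (X → ℝ)) (hA1 : ∀ f ∈ A, BaireOne f)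
    (C : ℝ) (hA2 : ∀ f ∈ A, ∀ x, |f x| ≤ C) :
    (∀ f : X → ℝ, BaireOne f → (∃ c, ∀ x, |f x| ≤ c) →
      BaireOne (Tmap f) ∧ ∃ c, ∀ p : Bstar X, |Tmap f p| ≤ c) ∧
    (∀ f g : X → ℝ, BaireOne f → (∃ c, ∀ x, |f x| ≤ c) →
      BaireOne g → (∃ c, ∀ x, |g x| ≤ c) → Tmap f = Tmap g → f = g) ∧
    (∀ (f : ℕ → X → ℝ) (g : X → ℝ), (∀ n, f n ∈ A) → g ∈ A →
      (∀ x, Tendsto (fun n => f n x) atTop (nhds (g x))) →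
      ∀ p : Bstar X, Tendsto (fun n => Tmap (f n) p) atTop (nhds (Tmap g p))) :=
  Tmap_wellDefined_injective_seqContinuous_general A hA1 C hA2
end
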